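/- arXiv:2509.07288 — 4 statements merged into one kernel-verified Lean document; each statement's English description precedes it below -/
import Mathlib

section
/- Let H be an r×n matrix over 𝔽₂ and P an r'×r matrix over 𝔽₂, and let d and w be natural numbers. Assume (i) every vector e ∈ 𝔽₂ⁿ with Hamming weight strictly less than d satisfies |H e| ≤ w, and (ii) every nonzero vector s ∈ 𝔽₂^r with P s = 0 has Hamming weight at least w + 1. Then for every e ∈ 𝔽₂ⁿ with P (H e) = 0, either H e = 0 or the Hamming weight of e is at least d. -/
/-- **Compressed syndromes (Theorem 1).** If every error of Hamming weight
less than `d` has syndrome (w.r.t. `H`) of weight at most `w`, and `P` is the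
parity check matrix of a code of distance at least `w + 1`, then any error `e`
with `P (H e) = 0` either has trivial syndrome `H e = 0` or weight at least `d`. -/
theorem compressed_syndrome_detectability
    (r n r' d w : ℕ)
    (H : Matrix (Fin r) (Fin n) (ZMod 2))
    (P : Matrix (Fin r') (Fin r) (ZMod 2))
    (hsyn : ∀ e : Fin n → ZMod 2, hammingNorm e < d → hammingNorm (H.mulVec e) ≤ w)
    (hdist : ∀ s : Fin r → ZMod 2, s ≠ 0 → P.mulVec s = 0 → w + 1 ≤ hammingNorm s) :
    ∀ e : Fin n → ZMod 2, P.mulVec (H.mulVec e) = 0 →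
      H.mulVec e = 0 ∨ d ≤ hammingNorm e := by
  intro e hPHe
  refine or_iff_not_imp_left.2 fun hHe => ?_
  by_contra! hlight
  exact absurd (hsyn e hlight) (Nat.not_le.2 (hdist _ hHe hPHe))
end

section
/- Let H be an r×n matrix over 𝔽₂, let d = 2t + 1, and let P be an r'×r matrix over 𝔽₂. Assume (i) every vector e ∈ 𝔽₂ⁿ with Hamming weight strictly less than d satisfies |H e| ≤ w, and (ii) every nonzero vector s ∈ 𝔽₂^r with P s = 0 has Hamming weight at least w + 1. Then any two vectors e₁, e₂ ∈ 𝔽₂ⁿ each of Hamming weight at most t that satisfy P (H e₁) = P (H e₂) also satisfy H e₁ = H e₂; that is, the compressed measurements P H distinguish the syndromes of all errors of weight at most t. -/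
theorem hammingNorm_sub_le {ι : Type*} [Fintype ι] {β : ι → Type*} [∀ i, AddGroup (β i)]
    [∀ i, DecidableEq (β i)] (x y : ∀ i, β i) :
    hammingNorm (x - y) ≤ hammingNorm x + hammingNorm y :=
  calc hammingNorm (x - y) = hammingDist x y := by
        simp_rw [hammingNorm, hammingDist, Pi.sub_apply, ne_eq, sub_eq_zero]
    _ ≤ hammingDist x 0 + hammingDist 0 y := hammingDist_triangle x 0 y
    _ = hammingNorm x + hammingNorm y := by rw [hammingDist_zero_right, hammingDist_zero_left]

/-- **Compressed measurements distinguish low-weight errors.** With `d = 2t + 1`,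
if every error of weight less than `d` has syndrome of weight at most `w`
(w.r.t. `H`), and `P` is a parity check matrix of distance at least `w + 1`,
then any two errors of weight at most `t` with equal compressed syndromes
`P (H e₁) = P (H e₂)` have equal syndromes `H e₁ = H e₂`. -/
theorem compressed_syndrome_distinguishes
    (r n r' t w : ℕ)
    (H : Matrix (Fin r) (Fin n) (ZMod 2))
    (P : Matrix (Fin r') (Fin r) (ZMod 2))
    (hsyn : ∀ e : Fin n → ZMod 2, hammingNorm e < 2 * t + 1 →
      hammingNorm (H.mulVec e) ≤ w)
    (hdist : ∀ s : Fin r → ZMod 2, s ≠ 0 → P.mulVec s = 0 → w + 1 ≤ hammingNorm s) :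
    ∀ e₁ e₂ : Fin n → ZMod 2, hammingNorm e₁ ≤ t → hammingNorm e₂ ≤ t →
      P.mulVec (H.mulVec e₁) = P.mulVec (H.mulVec e₂) →
      H.mulVec e₁ = H.mulVec e₂ := by
  intro e₁ e₂ h₁ h₂ hP
  rw [← sub_eq_zero, ← Matrix.mulVec_sub]
  by_contra hne
  have hker : P.mulVec (H.mulVec (e₁ - e₂)) = 0 := by
    rw [Matrix.mulVec_sub, Matrix.mulVec_sub, hP, sub_self]
  have hlight : hammingNorm (H.mulVec (e₁ - e₂)) ≤ w :=
    hsyn _ (by have := hammingNorm_sub_le e₁ e₂; omega)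
  have := hdist _ hne hker
  omega
end

section
/- Let H be an r×n matrix over 𝔽₂ with rows h₁, …, h_r, and let γ be a positive natural number. Consider γ rounds of measurements, where round j measures h₁, …, h_r in order. Let e₀ ∈ 𝔽₂ⁿ be the initial data error, let δ(j,i) ∈ 𝔽₂ⁿ be the data error occurring immediately before measurement i of round j, and let f(j,i) ∈ 𝔽₂ be the flip on the outcome of measurement i of round j. Define the cumulative data error before measurement i of round j as c(j,i) = e₀ + Σ δ(j',i') over all pairs (j',i') lexicographically at most (j,i), the observed outcome o(j,i) = ⟨h_i, c(j,i)⟩ + f(j,i), and the accumulated data error up to round j as ē^j = e₀ + Σ_{j' < j} Σ_i δ(j',i). If o(j,i) = 0 for all j and i (the error is undetectable) and H ē^j ≠ 0 for every round j, then the total error weight Σ_{j,i} |δ(j,i)| + #{(j,i) : f(j,i) = 1} is at least γ. -/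
/-!
If some round `j` carried no error at all, the cumulative data error would equal `ē^j`
before every measurement of that round, so the vanishing outcomes of that round would say
`⟨hᵢ, ē^j⟩ = 0` for every row, i.e. `H ē^j = 0`. Hence every one of the `γ` rounds carries
weight at least one.
-/

open Finset

theorem Finset.sum_filter_or_of_eq_zero {α M : Type*} [AddCommMonoid M] (s : Finset α)
    (A B : α → Prop) [DecidablePred A] [DecidablePred B] (g : α → M)
    (hg : ∀ x ∈ s, B x → ¬ A x → g x = 0) :
    ∑ x ∈ s.filter (fun x => A x ∨ B x), g x = ∑ x ∈ s.filter A, g x := by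
  refine (sum_subset (monotone_filter_right s fun _ _ => Or.inl) fun x hx hxA => ?_).symm
  simp only [mem_filter, not_and] at hx hxA
  exact hg x hx.1 (hx.2.resolve_left (hxA hx.1)) (hxA hx.1)

theorem Finset.card_filter_prod_eq_sum_card {α β : Type*} [Fintype α] [Fintype β]
    (P : α → β → Prop) [∀ a b, Decidable (P a b)] :
    #{p : α × β | P p.1 p.2} = ∑ a, #{b | P a b} := by
  simp only [card_filter, Fintype.sum_prod_type]

theorem Matrix.mulVec_eq_zero_iff_forall_dotProduct {m n R : Type*} [Fintype n]
    [NonUnitalNonAssocSemiring R] (H : Matrix m n R) (v : n → R) :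
    H.mulVec v = 0 ↔ ∀ i, dotProduct (H i) v = 0 :=
  funext_iff

theorem ZMod.eq_zero_of_ne_one {x : ZMod 2} : x ≠ 1 → x = 0 := by
  revert x
  decide

theorem mulVec_accumulated_eq_zero_of_round_error_free {R : Type*}
    [NonUnitalNonAssocSemiring R] {r n γ : ℕ} (H : Matrix (Fin r) (Fin n) R) (e₀ : Fin n → R)
    (δ : Fin γ → Fin r → Fin n → R) (f : Fin γ → Fin r → R)
    (cum : Fin γ → Fin r → Fin n → R) (j : Fin γ)
    (hcum : ∀ i, cum j i = e₀ + ∑ p ∈ univ.filter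
        (fun p : Fin γ × Fin r => p.1 < j ∨ (p.1 = j ∧ p.2 ≤ i)), δ p.1 p.2)
    (hundet : ∀ i, dotProduct (H i) (cum j i) + f j i = 0)
    (hδ : ∀ i, δ j i = 0) (hf : ∀ i, f j i = 0) :
    H.mulVec (e₀ + ∑ p ∈ univ.filter (fun p : Fin γ × Fin r => p.1 < j), δ p.1 p.2) = 0 := by
  refine (Matrix.mulVec_eq_zero_iff_forall_dotProduct _ _).mpr fun i => ?_
  have hcum_eq : cum j i = e₀ + ∑ p ∈ univ.filter (fun p : Fin γ × Fin r => p.1 < j),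
      δ p.1 p.2 := by
    rw [hcum, sum_filter_or_of_eq_zero]
    rintro p - ⟨rfl, -⟩ -
    exact hδ p.2
  simpa only [hcum_eq, hf i, add_zero] using hundet i

/-- **Undetectable errors over `γ` repeated rounds (Lemma 1).**
Measuring the rows `h₁, …, h_r` of `H` in order in each of `γ` rounds, with
data error `δ j i` occurring immediately before measurement `i` of round `j`,
outcome flips `f j i`, and initial data error `e₀`: if every observed outcome
is `0` while for every round `j` the accumulated data error `ē^j` satisfies
`H ē^j ≠ 0`, then the total error weight is at least `γ`. -/
theorem undetectable_error_weight
    (r n γ : ℕ)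
    (H : Matrix (Fin r) (Fin n) (ZMod 2))
    (e₀ : Fin n → ZMod 2)
    (δ : Fin γ → Fin r → Fin n → ZMod 2)
    (f : Fin γ → Fin r → ZMod 2)
    -- the cumulative data error before measurement `i` of round `j`
    (cum : Fin γ → Fin r → Fin n → ZMod 2)
    (hcum : ∀ j i, cum j i =
      e₀ + ∑ p ∈ Finset.univ.filter
        (fun p : Fin γ × Fin r => p.1 < j ∨ (p.1 = j ∧ p.2 ≤ i)), δ p.1 p.2)
    -- every observed outcome is zero (the error is undetectable)
    (hundet : ∀ j i, dotProduct (H i) (cum j i) + f j i = 0)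
    -- the accumulated data error up to round `j` never lies in the kernel of `H`
    (hacc : ∀ j : Fin γ,
      H.mulVec (e₀ + ∑ p ∈ Finset.univ.filter
        (fun p : Fin γ × Fin r => p.1 < j), δ p.1 p.2) ≠ 0) :
    γ ≤ (∑ j, ∑ i, hammingNorm (δ j i)) +
      (Finset.univ.filter fun p : Fin γ × Fin r => f p.1 p.2 = 1).card := by
  have round_weight_pos : ∀ j, 1 ≤ ∑ i, hammingNorm (δ j i) + #{i | f j i = 1} := by
    intro j
    by_contra! hzero
    obtain ⟨hδ_weight, hf_card⟩ :
        ∑ i, hammingNorm (δ j i) = 0 ∧ #{i | f j i = 1} = 0 := by omega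
    refine hacc j (mulVec_accumulated_eq_zero_of_round_error_free H e₀ δ f cum j (hcum j)
      (hundet j) (fun i => ?_) (fun i => ?_))
    · exact hammingNorm_eq_zero.mp (sum_eq_zero_iff.mp hδ_weight i (mem_univ i))
    · exact ZMod.eq_zero_of_ne_one <|
        filter_eq_empty_iff.mp (card_eq_zero.mp hf_card) (mem_univ i)
  calc γ = ∑ _j : Fin γ, 1 := by simp
    _ ≤ ∑ j, (∑ i, hammingNorm (δ j i) + #{i | f j i = 1}) :=
        sum_le_sum fun j _ => round_weight_pos j
    _ = _ := by rw [sum_add_distrib, card_filter_prod_eq_sum_card fun j i => f j i = 1]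
end

section
/- Let F be a field, let n and t be natural numbers, and let x : Fin n → F be an injective function with x_j ≠ 0 for every j. Let v : Fin n → F be a nonzero vector such that Σ_j v_j · (x_j)^{i} = 0 for every exponent i with 1 ≤ i ≤ 2t. Then v has at least 2t + 1 nonzero coordinates. -/
/-!
Multiplying `v` coordinatewise by the nonzero `x j` preserves its support and turns the checks
for exponents `1, …, 2t` into checks for exponents `0, …, 2t - 1`. If the support of `v` had
`m ≤ 2t` elements, the checks for exponents `0, …, m - 1`, restricted to the support, would put
`v` in the kernel of an `m × m` Vandermonde matrix with distinct nodes, which is invertible.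
-/

open Finset Function

section

variable {ι R : Type*} [Fintype ι] [CommRing R] [IsDomain R]

theorem Fintype.eq_zero_of_forall_sum_mul_pow_eq_zero {f v : ι → R} (hf : Injective f)
    (hfv : ∀ k < Fintype.card ι, ∑ j, v j * f j ^ k = 0) : v = 0 := by
  let e := (Fintype.equivFin ι).symm
  have hv : v ∘ e = 0 := by
    refine Matrix.eq_zero_of_forall_pow_sum_mul_pow_eq_zero (f := f ∘ e) (hf.comp e.injective)
      fun k => ?_
    simpa only [comp_apply, e.sum_comp fun j => v j * f j ^ (k : ℕ)] using hfv k k.isLt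
  funext j
  simpa using congrFun hv (e.symm j)

theorem eq_zero_of_forall_lt_hammingNorm_sum_mul_pow_eq_zero [DecidableEq R] {f v : ι → R}
    (hf : Set.InjOn f (support v)) (hfv : ∀ k < hammingNorm v, ∑ j, v j * f j ^ k = 0) :
    v = 0 := by
  let w : {j // v j ≠ 0} → R := fun j => v j
  have hw : w = 0 := by
    refine Fintype.eq_zero_of_forall_sum_mul_pow_eq_zero (f := fun j : {j // v j ≠ 0} => f j)
      (fun a b hab => Subtype.ext (hf a.2 b.2 hab)) fun k hk => ?_
    rw [Fintype.card_subtype] at hk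
    calc ∑ j : {j // v j ≠ 0}, v j * f j ^ k
        = ∑ j with v j ≠ 0, v j * f j ^ k :=
          (sum_subtype _ mem_filter_univ fun j => v j * f j ^ k).symm
      _ = ∑ j, v j * f j ^ k := sum_filter_of_ne fun j _ hj => left_ne_zero_of_mul hj
      _ = 0 := hfv k hk
  funext j
  by_contra hj
  exact hj (congrFun hw ⟨j, hj⟩)

theorem lt_hammingNorm_of_forall_sum_mul_pow_eq_zero [DecidableEq R] {f v : ι → R} {m : ℕ}
    (hf : Set.InjOn f (support v)) (hv : v ≠ 0) (hfv : ∀ k < m, ∑ j, v j * f j ^ k = 0) :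
    m < hammingNorm v := by
  by_contra! hm
  exact hv (eq_zero_of_forall_lt_hammingNorm_sum_mul_pow_eq_zero hf fun k hk =>
    hfv k (hk.trans_le hm))

end

/-- **BCH distance property.** If `x : Fin n → F` takes pairwise distinct
nonzero values and the nonzero vector `v` satisfies the BCH parity checks
`∑ j, v j * (x j) ^ i = 0` for all `1 ≤ i ≤ 2t`, then `v` has at least
`2t + 1` nonzero coordinates. -/
theorem bch_distance
    (F : Type*) [Field F] [DecidableEq F]
    (n t : ℕ)
    (x : Fin n → F) (hinj : Function.Injective x) (hx : ∀ j, x j ≠ 0)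
    (v : Fin n → F) (hv : v ≠ 0)
    (hchk : ∀ i : ℕ, 1 ≤ i → i ≤ 2 * t → ∑ j, v j * (x j) ^ i = 0) :
    2 * t + 1 ≤ hammingNorm v := by
  have hnorm : hammingNorm (fun j => v j * x j) = hammingNorm v :=
    hammingNorm_comp (fun j a => a * x j) (fun j => mul_left_injective₀ (hx j))
      fun _ => zero_mul _
  have hv' : (fun j => v j * x j) ≠ 0 :=
    hammingNorm_ne_zero_iff.mp (hnorm ▸ hammingNorm_ne_zero_iff.mpr hv)
  rw [← hnorm]
  refine lt_hammingNorm_of_forall_sum_mul_pow_eq_zero hinj.injOn hv' fun k hk => ?_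
  simpa only [mul_assoc, pow_succ'] using hchk (k + 1) (by omega) (by omega)
end
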